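/- Let m > 0 and α ≥ 1. For each n ≥ 0 define a_n := 2·inf { Σ_{i=1}^n (m/2)·y_i² + Σ_{i=1}^{n+1} (1/2)·(y_i − α·y_{i−1})² : y_0, y_1, …, y_{n+1} ∈ ℝ, y_0 = 0, y_{n+1} = 1 }. Then a_0 = 1 and the sequence satisfies the recursion a_{n+1} = (a_n + m)/(a_n + m + α²) for all n ≥ 0. -/

import Mathlib

/-!
The cost is a quadratic form in the path, so the cheapest path from `0` to height `t` costs
`t² · vₙ`, where `vₙ = aₙ / 2` is the cheapest cost to height `1`. Splitting off the last two
terms, the cheapest path of length `n + 2` costs `min_t ((vₙ + m/2) t² + (1 - α t)² / 2)`,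
a one-variable quadratic minimum equal to `p / (2p + α²)` with `p = vₙ + m/2`.
-/

/-- The sequence `a_n`: twice the minimal cost of moving from `y_0 = 0` to `y_{n+1} = 1`
with hitting costs `(m/2)y_i²` (for `1 ≤ i ≤ n`) and switching costs
`(1/2)(y_i − α y_{i−1})²` (for `1 ≤ i ≤ n + 1`). -/
noncomputable def aSeq (m α : ℝ) (n : ℕ) : ℝ :=
  2 * sInf { r : ℝ | ∃ y : ℕ → ℝ, y 0 = 0 ∧ y (n + 1) = 1 ∧
    r = ∑ i ∈ Finset.Icc 1 n, m / 2 * (y i) ^ 2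
      + ∑ i ∈ Finset.Icc 1 (n + 1), 1 / 2 * (y i - α * y (i - 1)) ^ 2 }

open Finset

noncomputable section

namespace Switching

def pathCost (m α : ℝ) (n : ℕ) (y : ℕ → ℝ) : ℝ :=
  ∑ i ∈ Icc 1 n, m / 2 * y i ^ 2 + ∑ i ∈ Icc 1 (n + 1), 1 / 2 * (y i - α * y (i - 1)) ^ 2

def admissibleCosts (m α : ℝ) (n : ℕ) : Set ℝ :=
  {r | ∃ y : ℕ → ℝ, y 0 = 0 ∧ y (n + 1) = 1 ∧ r = pathCost m α n y}

def optCost (m α : ℝ) : ℕ → ℝ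
  | 0 => 1 / 2
  | n + 1 =>
    let p := optCost m α n + m / 2
    p / (2 * p + α ^ 2)

variable {m α : ℝ} {n : ℕ}

lemma aSeq_eq_two_mul_sInf : aSeq m α n = 2 * sInf (admissibleCosts m α n) := rfl

lemma pathCost_nonneg (hm : 0 ≤ m) (y : ℕ → ℝ) : 0 ≤ pathCost m α n y := by
  unfold pathCost
  positivity

lemma pathCost_congr {y z : ℕ → ℝ} (h : ∀ i ≤ n + 1, y i = z i) :
    pathCost m α n y = pathCost m α n z := by
  unfold pathCost
  congr 1 <;> refine sum_congr rfl fun i hi => ?_ <;> simp only [mem_Icc] at hi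
  · rw [h i (by omega)]
  · rw [h i (by omega), h (i - 1) (by omega)]

lemma pathCost_smul (c : ℝ) (y : ℕ → ℝ) :
    pathCost m α n (c • y) = c ^ 2 * pathCost m α n y := by
  simp only [pathCost, Pi.smul_apply, smul_eq_mul, mul_add, mul_sum]
  congr 1 <;> refine sum_congr rfl fun i _ => ?_ <;> ring

lemma pathCost_succ (y : ℕ → ℝ) :
    pathCost m α (n + 1) y = pathCost m α n y + m / 2 * y (n + 1) ^ 2
      + 1 / 2 * (y (n + 2) - α * y (n + 1)) ^ 2 := by
  simp only [pathCost, sum_Icc_succ_top (Nat.le_add_left 1 _), Nat.add_sub_cancel]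
  ring

lemma quadratic_eq_div_add_sq (p α t : ℝ) (hB : 2 * p + α ^ 2 ≠ 0) :
    p * t ^ 2 + 1 / 2 * (1 - α * t) ^ 2
      = p / (2 * p + α ^ 2) + ((2 * p + α ^ 2) * t - α) ^ 2 / (2 * (2 * p + α ^ 2)) := by
  rw [div_add_div _ _ hB (mul_ne_zero two_ne_zero hB),
    eq_div_iff (mul_ne_zero hB (mul_ne_zero two_ne_zero hB))]
  ring

lemma mul_sq_le_pathCost (hm : 0 ≤ m) {v : ℝ} (hv : IsLeast (admissibleCosts m α n) v)
    {y : ℕ → ℝ} (hy : y 0 = 0) : v * y (n + 1) ^ 2 ≤ pathCost m α n y := by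
  set t := y (n + 1)
  rcases eq_or_ne t 0 with ht | ht
  · simpa [ht] using pathCost_nonneg hm y
  have hscaled : pathCost m α n (t⁻¹ • y) ∈ admissibleCosts m α n :=
    ⟨t⁻¹ • y, by simp [hy], by simp [t, ht], rfl⟩
  have := hv.2 hscaled
  rw [pathCost_smul, inv_pow] at this
  rwa [← le_inv_mul_iff₀' (by positivity)]

lemma isLeast_admissibleCosts_zero : IsLeast (admissibleCosts m α 0) (1 / 2) := by
  refine ⟨⟨fun i => if i = 0 then 0 else 1, by simp, by simp, by norm_num [pathCost]⟩, ?_⟩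
  rintro r ⟨y, hy0, hy1, rfl⟩
  simp [pathCost, hy0, hy1]

lemma isLeast_admissibleCosts_succ (hm : 0 < m) {v : ℝ}
    (hv : IsLeast (admissibleCosts m α n) v) :
    IsLeast (admissibleCosts m α (n + 1)) ((v + m / 2) / (2 * (v + m / 2) + α ^ 2)) := by
  set p := v + m / 2
  have hv_nonneg : 0 ≤ v := by
    obtain ⟨y, -, -, rfl⟩ := hv.1
    exact pathCost_nonneg hm.le y
  have hB : 0 < 2 * p + α ^ 2 := by positivity
  have hcost : ∀ y : ℕ → ℝ, y (n + 2) = 1 →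
      pathCost m α (n + 1) y = pathCost m α n y - v * y (n + 1) ^ 2 + p / (2 * p + α ^ 2)
        + ((2 * p + α ^ 2) * y (n + 1) - α) ^ 2 / (2 * (2 * p + α ^ 2)) := by
    intro y hy
    rw [pathCost_succ, hy]
    linear_combination quadratic_eq_div_add_sq p α (y (n + 1)) hB.ne'
  constructor
  · obtain ⟨y, hy0, hy1, hyv⟩ := hv.1
    -- `t` kills the square in `hcost`; rescale the optimal `n`-path to end at height `t`.
    set t := α / (2 * p + α ^ 2)
    let z := Function.update (t • y) (n + 2) 1
    have hz : ∀ i ≤ n + 1, z i = (t • y) i := fun i hi => Function.update_of_ne (by omega) _ _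
    refine ⟨z, by simp [z, hy0], by simp [z], ?_⟩
    rw [hcost z (by simp [z]), pathCost_congr hz, pathCost_smul, ← hyv, hz _ le_rfl,
      Pi.smul_apply, hy1, smul_eq_mul, mul_one, mul_div_cancel₀ _ hB.ne']
    ring
  · rintro r ⟨y, hy0, hy1, rfl⟩
    have hlower := mul_sq_le_pathCost hm.le hv hy0
    have hsq : 0 ≤ ((2 * p + α ^ 2) * y (n + 1) - α) ^ 2 / (2 * (2 * p + α ^ 2)) := by
      positivity
    rw [hcost y hy1]
    linarith

theorem isLeast_admissibleCosts_optCost (hm : 0 < m) (n : ℕ) :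
    IsLeast (admissibleCosts m α n) (optCost m α n) := by
  induction n with
  | zero => exact isLeast_admissibleCosts_zero
  | succ n ih => exact isLeast_admissibleCosts_succ hm ih

end Switching

end

theorem stmt11_general (m α : ℝ) (hm : 0 < m) :
    aSeq m α 0 = 1 ∧
      ∀ n : ℕ, aSeq m α (n + 1) = (aSeq m α n + m) / (aSeq m α n + m + α ^ 2) := by
  have ha : ∀ n, aSeq m α n = 2 * Switching.optCost m α n := fun n => by
    rw [Switching.aSeq_eq_two_mul_sInf,
      (Switching.isLeast_admissibleCosts_optCost hm n).csInf_eq]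
  refine ⟨by norm_num [ha, Switching.optCost], fun n => ?_⟩
  rw [ha, ha, Switching.optCost]
  ring

/-- `a_0 = 1` and the recursion `a_{n+1} = (a_n + m)/(a_n + m + α²)`. -/
theorem stmt11 (m α : ℝ) (hm : 0 < m) (hα : 1 ≤ α) :
    aSeq m α 0 = 1 ∧
      ∀ n : ℕ, aSeq m α (n + 1) = (aSeq m α n + m) / (aSeq m α n + m + α ^ 2) :=
  stmt11_general m α hm
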